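/- arXiv:1101.0268 — 2 statements merged into one kernel-verified Lean document; each statement's English description precedes it below -/
import Mathlib

section
/- For a differential expression of the form φ = a(u)u_x + ε³ ∂_x( b₄(u) u_xx u_x + (1/3) b₄'(u) u_x³ ) with a'(u) ≠ 0, the degree-3 (order ε³) terms can be eliminated by the canonical transformation generated by the Hamiltonian K = ∫ ε² (b₄(u)/(6 a'(u))) u_x² dx; i.e., the transformed equation has no terms of order ε³ (modulo higher order in ε). -/
open scoped ContDiff
noncomputable section

abbrev P3 := ℝ × ℝ × ℝ

def pd (e : P3) (f : P3 → ℝ) : P3 → ℝ := fun q => fderiv ℝ f q e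

theorem pd_smooth {f : P3 → ℝ} (hf : ContDiff ℝ ∞ f) (e : P3) : ContDiff ℝ ∞ (pd e f) :=
  (hf.fderiv_right (by exact_mod_cast le_refl _)).clm_apply contDiff_const

theorem pd_add {e : P3} {f g : P3 → ℝ} {q : P3} (hf : DifferentiableAt ℝ f q)
    (hg : DifferentiableAt ℝ g q) :
    pd e (fun p => f p + g p) q = pd e f q + pd e g q := by
  simp [pd, fderiv_fun_add hf hg]

theorem pd_sub {e : P3} {f g : P3 → ℝ} {q : P3} (hf : DifferentiableAt ℝ f q)
    (hg : DifferentiableAt ℝ g q) :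
    pd e (fun p => f p - g p) q = pd e f q - pd e g q := by
  simp [pd, fderiv_fun_sub hf hg]

theorem pd_neg {e : P3} {f : P3 → ℝ} {q : P3} :
    pd e (fun p => -f p) q = -pd e f q := by
  simp [pd, fderiv_neg]

theorem pd_mul {e : P3} {f g : P3 → ℝ} {q : P3} (hf : DifferentiableAt ℝ f q)
    (hg : DifferentiableAt ℝ g q) :
    pd e (fun p => f p * g p) q = f q * pd e g q + g q * pd e f q := by
  simp [pd, fderiv_fun_mul hf hg]

theorem pd_const_mul {e : P3} {f : P3 → ℝ} {q : P3} (c : ℝ) (hf : DifferentiableAt ℝ f q) :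
    pd e (fun p => c * f p) q = c * pd e f q := by
  simp [pd, fderiv_const_mul hf]

theorem pd_comp {e : P3} {f : P3 → ℝ} {q : P3} (c : ℝ → ℝ)
    (hc : DifferentiableAt ℝ c (f q)) (hf : DifferentiableAt ℝ f q) :
    pd e (fun p => c (f p)) q = deriv c (f q) * pd e f q := by
  have h := fderiv_comp (𝕜 := ℝ) q hc hf
  have h2 : (fun p => c (f p)) = c ∘ f := rfl
  rw [pd, h2, h]
  simp only [ContinuousLinearMap.coe_comp', Function.comp_apply]
  have : ∀ u : ℝ, fderiv ℝ c (f q) u = u * deriv c (f q) := by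
    intro u
    have : u = u • (1:ℝ) := by simp
    rw [this, map_smul, fderiv_apply_one_eq_deriv]
    simp [mul_comm]
  rw [this]; rw [pd]; ring

theorem pd_pow {e : P3} {f : P3 → ℝ} {q : P3} (n : ℕ) (hf : DifferentiableAt ℝ f q) :
    pd e (fun p => f p ^ n) q = (n : ℝ) * f q ^ (n - 1) * pd e f q := by
  have := pd_comp (e := e) (fun x : ℝ => x ^ n) (by fun_prop) hf
  simpa [deriv_pow] using this

theorem pd_comm {f : P3 → ℝ} (hf : ContDiff ℝ ∞ f) (e e' : P3) (q : P3) :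
    pd e (pd e' f) q = pd e' (pd e f) q := by
  have hsymm : IsSymmSndFDerivAt ℝ f q :=
    (hf.contDiffAt).isSymmSndFDerivAt (n := ∞) (by rw [minSmoothness_of_isRCLikeNormedField]; exact WithTop.coe_le_coe.mpr le_top)
  have hdf : DifferentiableAt ℝ (fderiv ℝ f) q :=
    ((hf.fderiv_right (m := ∞) (by exact_mod_cast le_refl _)).differentiable
      (by decide)) q
  have key : ∀ w : P3, fderiv ℝ (fun p => fderiv ℝ f p w) q
      = (fderiv ℝ (fderiv ℝ f) q).flip w := by
    intro w
    have h := fderiv_clm_apply (c := fderiv ℝ f) (u := fun _ => w) hdf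
      (differentiableAt_const w)
    simpa using h
  show fderiv ℝ (fun p => fderiv ℝ f p e') q e = fderiv ℝ (fun p => fderiv ℝ f p e) q e'
  rw [key e', key e]
  exact hsymm e e'

def eE : P3 := (1,0,0)
def eT : P3 := (0,1,0)
def eX : P3 := (0,0,1)

theorem deriv_slice_x {f : P3 → ℝ} {ε t x : ℝ} (hf : DifferentiableAt ℝ f (ε,t,x)) :
    deriv (fun y => f (ε,t,y)) x = pd eX f (ε,t,x) := by
  have hc : HasDerivAt (fun y : ℝ => ((ε,t,y) : P3)) eX x :=
    (hasDerivAt_const x ε).prodMk ((hasDerivAt_const x t).prodMk (hasDerivAt_id x))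
  exact (hf.hasFDerivAt.comp_hasDerivAt x hc).deriv

theorem deriv_slice_t {f : P3 → ℝ} {ε t x : ℝ} (hf : DifferentiableAt ℝ f (ε,t,x)) :
    deriv (fun s => f (ε,s,x)) t = pd eT f (ε,t,x) := by
  have hc : HasDerivAt (fun s : ℝ => ((ε,s,x) : P3)) eT t :=
    (hasDerivAt_const t ε).prodMk ((hasDerivAt_id t).prodMk (hasDerivAt_const t x))
  exact (hf.hasFDerivAt.comp_hasDerivAt t hc).deriv

theorem pd_cube_mul (e : P3) (he : e.1 = 0) {f : P3 → ℝ} {q : P3}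
    (hf : DifferentiableAt ℝ f q) :
    pd e (fun p => p.1 ^ 3 * f p) q = q.1 ^ 3 * pd e f q := by
  have h1 : DifferentiableAt ℝ (fun p : P3 => p.1 ^ 3) q := by fun_prop
  rw [pd_mul h1 hf]
  have : pd e (fun p : P3 => p.1 ^ 3) q = 0 := by
    have := pd_pow (e := e) (f := fun p : P3 => p.1) (q := q) 3 (by fun_prop)
    have hfst : pd e (fun p : P3 => p.1) q = e.1 := by
      simp [pd, show (fun p : P3 => p.1) = Prod.fst from rfl, fderiv_fst]
    rw [this, hfst, he]; ring
  rw [this]; ring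

theorem ContDiffAt.deriv'' {f : ℝ → ℝ} {x : ℝ} (hf : ContDiffAt ℝ ∞ f x) :
    ContDiffAt ℝ ∞ (deriv f) x := by
  rw [contDiffAt_infty]
  intro n
  obtain ⟨u, hu, hfo⟩ := hf.contDiffOn (m := ((n+1 : ℕ) : WithTop ℕ∞))
    (by exact_mod_cast le_top) (by simp)
  obtain ⟨U, hUu, hUo, hxU⟩ := mem_nhds_iff.mp hu
  have hfo' : ContDiffOn ℝ ((n+1 : ℕ)) f U := hfo.mono hUu
  have : ContDiffOn ℝ n (deriv f) U := by
    have h2 : ContDiffOn ℝ ((n : WithTop ℕ∞) + 1) f U := by exact_mod_cast hfo'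
    exact ((contDiffOn_succ_iff_deriv_of_isOpen hUo).mp h2).2.2
  exact this.contDiffAt (hUo.mem_nhds hxU)
section Defs
variable (a b4 : ℝ → ℝ) (v : ℝ → ℝ → ℝ → ℝ)

def VV : P3 → ℝ := fun q => v q.1 q.2.1 q.2.2
def gg : ℝ → ℝ := fun w => b4 w / (6 * deriv a w)
def u1 : P3 → ℝ := pd eX (VV v)
def u2 : P3 → ℝ := pd eX (u1 v)
def PP : P3 → ℝ := fun q =>
  -(deriv (gg a b4) (VV v q)) * (u1 v q) ^ 2 - 2 * (b4 (VV v q) / (6 * deriv a (VV v q))) * u2 v q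
def WW : P3 → ℝ := pd eX (PP a b4 v)
def S0 : P3 → ℝ := fun q =>
  b4 (VV v q) * u2 v q * u1 v q + 1 / 3 * deriv b4 (VV v q) * (u1 v q) ^ 3
def SS : P3 → ℝ := pd eX (S0 b4 v)
def JJ : P3 → ℝ := fun q => pd eT (PP a b4 v) q + a (VV v q) * WW a b4 v q - S0 b4 v q
def B2 : P3 → ℝ := fun q =>
  -(SS b4 v q) + pd eT (WW a b4 v) q + a (VV v q) * pd eX (WW a b4 v) q
    + WW a b4 v q * deriv a (VV v q) * (u1 v q + q.1 ^ 3 * pd eX (WW a b4 v) q)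
def Q2 : P3 → ℝ := fun q =>
  ∫ s in (0:ℝ)..1, (1 - s) * deriv (deriv a) (VV v q + s * (q.1 ^ 3 * WW a b4 v q))
def R1 : P3 → ℝ := fun q => ∫ s in (0:ℝ)..1, pd eE (B2 a b4 v) (s * q.1, q.2.1, q.2.2)

variable {a b4 v}

theorem smooth_da (haS : ContDiff ℝ ∞ a) : ContDiff ℝ ∞ (deriv a) :=
  (contDiff_infty_iff_deriv.mp haS).2

theorem hgAt (haS : ContDiff ℝ ∞ a) (hbS : ContDiff ℝ ∞ b4)
    (hrange : ∀ q : P3, deriv a (VV v q) ≠ 0) :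
    ∀ q : P3, ContDiffAt ℝ ∞ (gg a b4) (VV v q) := by
  intro q
  exact (hbS.contDiffAt).div ((contDiff_const.mul (smooth_da haS)).contDiffAt)
    (by simpa using hrange q)

theorem smooth_u1 (hv' : ContDiff ℝ ∞ (VV v)) : ContDiff ℝ ∞ (u1 v) := pd_smooth hv' _
theorem smooth_u2 (hv' : ContDiff ℝ ∞ (VV v)) : ContDiff ℝ ∞ (u2 v) :=
  pd_smooth (smooth_u1 hv') _
theorem smooth_aV (haS : ContDiff ℝ ∞ a) (hv' : ContDiff ℝ ∞ (VV v)) :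
    ContDiff ℝ ∞ (fun q => a (VV v q)) := haS.comp hv'
theorem smooth_A1V (haS : ContDiff ℝ ∞ a) (hv' : ContDiff ℝ ∞ (VV v)) :
    ContDiff ℝ ∞ (fun q => deriv a (VV v q)) := (smooth_da haS).comp hv'
theorem smooth_b4V (hbS : ContDiff ℝ ∞ b4) (hv' : ContDiff ℝ ∞ (VV v)) :
    ContDiff ℝ ∞ (fun q => b4 (VV v q)) := hbS.comp hv'
theorem smooth_B1V (hbS : ContDiff ℝ ∞ b4) (hv' : ContDiff ℝ ∞ (VV v)) :
    ContDiff ℝ ∞ (fun q => deriv b4 (VV v q)) := (contDiff_infty_iff_deriv.mp hbS).2.comp hv'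

theorem smooth_G0V (haS : ContDiff ℝ ∞ a) (hbS : ContDiff ℝ ∞ b4)
    (hv' : ContDiff ℝ ∞ (VV v)) (hrange : ∀ q : P3, deriv a (VV v q) ≠ 0) :
    ContDiff ℝ ∞ (fun q => gg a b4 (VV v q)) := by
  rw [contDiff_iff_contDiffAt]
  exact fun q => (hgAt haS hbS hrange q).comp q hv'.contDiffAt

theorem smooth_G1V (haS : ContDiff ℝ ∞ a) (hbS : ContDiff ℝ ∞ b4)
    (hv' : ContDiff ℝ ∞ (VV v)) (hrange : ∀ q : P3, deriv a (VV v q) ≠ 0) :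
    ContDiff ℝ ∞ (fun q => deriv (gg a b4) (VV v q)) := by
  rw [contDiff_iff_contDiffAt]
  exact fun q => ((hgAt haS hbS hrange q).deriv'').comp q hv'.contDiffAt

theorem smooth_PP (haS : ContDiff ℝ ∞ a) (hbS : ContDiff ℝ ∞ b4)
    (hv' : ContDiff ℝ ∞ (VV v)) (hrange : ∀ q : P3, deriv a (VV v q) ≠ 0) :
    ContDiff ℝ ∞ (PP a b4 v) := by
  have h1 := smooth_G1V haS hbS hv' hrange
  have h2 : ContDiff ℝ ∞ (fun q => b4 (VV v q) / (6 * deriv a (VV v q))) := by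
    have := smooth_G0V haS hbS hv' hrange
    simpa [gg] using this
  exact (h1.neg.mul ((smooth_u1 hv').pow 2)).sub
    ((contDiff_const.mul h2).mul (smooth_u2 hv'))

theorem smooth_WW (haS : ContDiff ℝ ∞ a) (hbS : ContDiff ℝ ∞ b4)
    (hv' : ContDiff ℝ ∞ (VV v)) (hrange : ∀ q : P3, deriv a (VV v q) ≠ 0) :
    ContDiff ℝ ∞ (WW a b4 v) := pd_smooth (smooth_PP haS hbS hv' hrange) _

theorem smooth_S0 (hbS : ContDiff ℝ ∞ b4) (hv' : ContDiff ℝ ∞ (VV v)) :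
    ContDiff ℝ ∞ (S0 b4 v) :=
  (((smooth_b4V hbS hv').mul (smooth_u2 hv')).mul (smooth_u1 hv')).add
    ((contDiff_const.mul (smooth_B1V hbS hv')).mul ((smooth_u1 hv').pow 3))

theorem smooth_SS (hbS : ContDiff ℝ ∞ b4) (hv' : ContDiff ℝ ∞ (VV v)) :
    ContDiff ℝ ∞ (SS b4 v) := pd_smooth (smooth_S0 hbS hv') _

theorem smooth_JJ (haS : ContDiff ℝ ∞ a) (hbS : ContDiff ℝ ∞ b4)
    (hv' : ContDiff ℝ ∞ (VV v)) (hrange : ∀ q : P3, deriv a (VV v q) ≠ 0) :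
    ContDiff ℝ ∞ (JJ a b4 v) :=
  ((pd_smooth (smooth_PP haS hbS hv' hrange) _).add
    ((smooth_aV haS hv').mul (smooth_WW haS hbS hv' hrange))).sub (smooth_S0 hbS hv')

theorem smooth_B2 (haS : ContDiff ℝ ∞ a) (hbS : ContDiff ℝ ∞ b4)
    (hv' : ContDiff ℝ ∞ (VV v)) (hrange : ∀ q : P3, deriv a (VV v q) ≠ 0) :
    ContDiff ℝ ∞ (B2 a b4 v) := by
  have hW := smooth_WW haS hbS hv' hrange
  have hWx : ContDiff ℝ ∞ (pd eX (WW a b4 v)) := pd_smooth hW _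
  have hWt : ContDiff ℝ ∞ (pd eT (WW a b4 v)) := pd_smooth hW _
  have hcube : ContDiff ℝ ∞ (fun q : P3 => q.1 ^ 3) := contDiff_fst.pow 3
  exact (((smooth_SS hbS hv').neg.add hWt).add ((smooth_aV haS hv').mul hWx)).add
    ((hW.mul (smooth_A1V haS hv')).mul ((smooth_u1 hv').add (hcube.mul hWx)))

end Defs
section Anal
set_option maxHeartbeats 1000000
open MeasureTheory intervalIntegral

theorem taylor2 {a : ℝ → ℝ} (haS : ContDiff ℝ ∞ a) (x δ : ℝ) :
    a (x + δ) = a x + δ * deriv a x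
      + δ ^ 2 * ∫ s in (0:ℝ)..1, (1 - s) * deriv (deriv a) (x + s * δ) := by
  have hda : ContDiff ℝ ∞ (deriv a) := smooth_da haS
  have hdda : Continuous (deriv (deriv a)) := (smooth_da hda).continuous
  have hline : ∀ s : ℝ, HasDerivAt (fun s : ℝ => x + s * δ) δ s := by
    intro s
    simpa using ((hasDerivAt_id s).mul_const δ).const_add x
  have h1 : ∀ s : ℝ, HasDerivAt (fun s => a (x + s * δ)) (deriv a (x + s * δ) * δ) s := by
    intro s
    exact HasDerivAt.comp s ((haS.differentiable (by decide) _).hasDerivAt) (hline s)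
  have h2 : ∀ s : ℝ, HasDerivAt (fun s => deriv a (x + s * δ))
      (deriv (deriv a) (x + s * δ) * δ) s := by
    intro s
    exact HasDerivAt.comp s ((hda.differentiable (by decide) _).hasDerivAt) (hline s)
  have h3 : ∀ s : ℝ, HasDerivAt (fun s : ℝ => 1 - s) (-1) s := by
    intro s
    simpa using (hasDerivAt_const s (1:ℝ)).fun_sub (hasDerivAt_id s)
  have hψ : ∀ s : ℝ, HasDerivAt
      (fun s => (1 - s) * (deriv a (x + s * δ) * δ) + a (x + s * δ))
      (δ ^ 2 * ((1 - s) * deriv (deriv a) (x + s * δ))) s := by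
    intro s
    have := ((h3 s).mul ((h2 s).mul_const δ)).add (h1 s)
    have heq : (-1) * (deriv a (x + s * δ) * δ)
        + (1 - s) * (deriv (deriv a) (x + s * δ) * δ * δ) + deriv a (x + s * δ) * δ
        = δ ^ 2 * ((1 - s) * deriv (deriv a) (x + s * δ)) := by ring
    rwa [heq] at this
  have hint : IntervalIntegrable
      (fun s => δ ^ 2 * ((1 - s) * deriv (deriv a) (x + s * δ))) volume 0 1 := by
    apply Continuous.intervalIntegrable
    exact continuous_const.mul ((continuous_const.sub continuous_id).mul
      (hdda.comp (continuous_const.add (continuous_id.mul continuous_const))))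
  have hFTC := integral_eq_sub_of_hasDerivAt (fun s _ => hψ s) hint
  rw [intervalIntegral.integral_const_mul] at hFTC
  simp only [sub_self, one_mul, zero_mul, sub_zero, mul_zero, add_zero, zero_add] at hFTC
  linear_combination -hFTC

theorem factor_eps {F : P3 → ℝ} (hF : ContDiff ℝ ∞ F) (hF0 : ∀ t x : ℝ, F (0,t,x) = 0)
    (ε t x : ℝ) :
    F (ε,t,x) = ε * ∫ s in (0:ℝ)..1, pd eE F (s * ε, t, x) := by
  have hφ : ∀ s : ℝ, HasDerivAt (fun s => F (s * ε, t, x)) (pd eE F (s * ε, t, x) * ε) s := by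
    intro s
    have hc : HasDerivAt (fun s : ℝ => ((s * ε, t, x) : P3)) ((ε, 0, 0) : P3) s := by
      simpa using ((hasDerivAt_id s).mul_const ε).prodMk
        ((hasDerivAt_const s t).prodMk (hasDerivAt_const s x))
    have hd := (hF.differentiable (by decide) _).hasFDerivAt.comp_hasDerivAt s hc
    have hsm : ((ε, 0, 0) : P3) = ε • eE := by
      simp [eE, Prod.ext_iff]
    have heq : fderiv ℝ F ((s * ε, t, x) : P3) ((ε, 0, 0) : P3)
        = pd eE F (s * ε, t, x) * ε := by
      rw [hsm, ContinuousLinearMap.map_smul]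
      simp [pd, smul_eq_mul, mul_comm]
    rwa [heq] at hd
  have hint : IntervalIntegrable (fun s => pd eE F (s * ε, t, x) * ε) volume 0 1 := by
    apply Continuous.intervalIntegrable
    exact (((pd_smooth hF eE).continuous).comp (by fun_prop)).mul continuous_const
  have hFTC := integral_eq_sub_of_hasDerivAt (fun s _ => hφ s) hint
  rw [intervalIntegral.integral_mul_const] at hFTC
  simp only [one_mul, zero_mul, hF0, sub_zero] at hFTC
  linear_combination -hFTC

end Anal
section Comp
variable {a b4 : ℝ → ℝ} {v : ℝ → ℝ → ℝ → ℝ}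

theorem diffAt {f : P3 → ℝ} (hf : ContDiff ℝ ∞ f) (q : P3) : DifferentiableAt ℝ f q :=
  hf.differentiable (by decide) q

theorem u1_def : pd eX (VV v) = u1 v := rfl
theorem u2_def : pd eX (u1 v) = u2 v := rfl

theorem pd_aV (haS : ContDiff ℝ ∞ a) (hv' : ContDiff ℝ ∞ (VV v)) (e : P3) (q : P3) :
    pd e (fun p => a (VV v p)) q = deriv a (VV v q) * pd e (VV v) q :=
  pd_comp a ((haS.differentiable (by decide)).differentiableAt) (diffAt hv' q)

theorem pd_A1V (haS : ContDiff ℝ ∞ a) (hv' : ContDiff ℝ ∞ (VV v)) (e : P3) (q : P3) :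
    pd e (fun p => deriv a (VV v p)) q = deriv (deriv a) (VV v q) * pd e (VV v) q :=
  pd_comp (deriv a) (((smooth_da haS).differentiable (by decide)).differentiableAt)
    (diffAt hv' q)

theorem pd_PP (haS : ContDiff ℝ ∞ a) (hbS : ContDiff ℝ ∞ b4)
    (hv' : ContDiff ℝ ∞ (VV v)) (hrange : ∀ q : P3, deriv a (VV v q) ≠ 0)
    (e : P3) (q : P3) :
    pd e (PP a b4 v) q
      = -(deriv (gg a b4) (VV v q) * (2 * u1 v q * pd e (u1 v) q)
          + (u1 v q) ^ 2 * (deriv (deriv (gg a b4)) (VV v q) * pd e (VV v) q))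
        - 2 * (gg a b4 (VV v q) * pd e (u2 v) q
          + u2 v q * (deriv (gg a b4) (VV v q) * pd e (VV v) q)) := by
  have hPPeq : PP a b4 v = fun p =>
      (-(deriv (gg a b4) (VV v p) * (u1 v p) ^ 2)) - 2 * (gg a b4 (VV v p) * u2 v p) := by
    funext p
    simp only [PP, gg]
    ring
  have dG1V : DifferentiableAt ℝ (fun p => deriv (gg a b4) (VV v p)) q :=
    diffAt (smooth_G1V haS hbS hv' hrange) q
  have dG0V : DifferentiableAt ℝ (fun p => gg a b4 (VV v p)) q :=
    diffAt (smooth_G0V haS hbS hv' hrange) q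
  have du1 : DifferentiableAt ℝ (u1 v) q := diffAt (smooth_u1 hv') q
  have du2 : DifferentiableAt ℝ (u2 v) q := diffAt (smooth_u2 hv') q
  have du1sq : DifferentiableAt ℝ (fun p => (u1 v p) ^ 2) q := du1.pow 2
  have dA : DifferentiableAt ℝ (fun p => -(deriv (gg a b4) (VV v p) * (u1 v p) ^ 2)) q :=
    (dG1V.mul du1sq).neg
  have dB : DifferentiableAt ℝ (fun p => 2 * (gg a b4 (VV v p) * u2 v p)) q :=
    (dG0V.mul du2).const_mul 2
  rw [hPPeq, pd_sub dA dB, pd_neg, pd_mul dG1V du1sq, pd_const_mul 2 (dG0V.fun_mul du2),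
    pd_mul dG0V du2, pd_pow 2 du1,
    pd_comp (deriv (gg a b4)) (((hgAt haS hbS hrange q).deriv'').differentiableAt (by decide))
      (diffAt hv' q),
    pd_comp (gg a b4) ((hgAt haS hbS hrange q).differentiableAt (by decide)) (diffAt hv' q)]
  push_cast
  ring

end Comp
section Monster
variable {a b4 : ℝ → ℝ} {v : ℝ → ℝ → ℝ → ℝ}

theorem J_vanishes (haS : ContDiff ℝ ∞ a) (hbS : ContDiff ℝ ∞ b4)
    (hv' : ContDiff ℝ ∞ (VV v)) (hrange : ∀ q : P3, deriv a (VV v q) ≠ 0)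
    (hE : ∀ q : P3, pd eT (VV v) q = -(a (VV v q) * u1 v q) - q.1 ^ 3 * SS b4 v q)
    (t x : ℝ) : JJ a b4 v (0, t, x) = 0 := by
  have hTVfun : pd eT (VV v) = fun q => -(a (VV v q) * u1 v q) - q.1 ^ 3 * SS b4 v q :=
    funext hE
  have du1 : ∀ q, DifferentiableAt ℝ (u1 v) q := diffAt (smooth_u1 hv')
  have du2 : ∀ q, DifferentiableAt ℝ (u2 v) q := diffAt (smooth_u2 hv')
  have daV : ∀ q, DifferentiableAt ℝ (fun p => a (VV v p)) q := diffAt (smooth_aV haS hv')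
  have dA1V : ∀ q, DifferentiableAt ℝ (fun p => deriv a (VV v p)) q :=
    diffAt (smooth_A1V haS hv')
  have dSS : ∀ q, DifferentiableAt ℝ (SS b4 v) q := diffAt (smooth_SS hbS hv')
  have dSSx : ∀ q, DifferentiableAt ℝ (pd eX (SS b4 v)) q :=
    diffAt (pd_smooth (smooth_SS hbS hv') eX)
  -- t-derivative of u1 as a function
  have hTu1fun : pd eT (u1 v) = fun q =>
      -(a (VV v q) * u2 v q + u1 v q * (deriv a (VV v q) * u1 v q))
        - q.1 ^ 3 * pd eX (SS b4 v) q := by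
    funext q
    rw [show u1 v = pd eX (VV v) from rfl, pd_comm hv' eT eX q, hTVfun]
    rw [pd_sub ((daV q).fun_mul (du1 q)).fun_neg (by fun_prop), pd_neg,
      pd_mul (daV q) (du1 q), pd_aV haS hv', pd_cube_mul eX rfl (dSS q)]
    rw [u1_def, u2_def]
  -- value at the slice point
  set q0 : P3 := (0, t, x) with hq0
  have hc0 : q0.1 ^ 3 = 0 := by norm_num [hq0]
  have hTV : pd eT (VV v) q0 = -(a (VV v q0) * u1 v q0) := by
    rw [hE q0]; simp [hc0]
  have hTu1 : pd eT (u1 v) q0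
      = -(a (VV v q0) * u2 v q0 + u1 v q0 * (deriv a (VV v q0) * u1 v q0)) := by
    rw [hTu1fun]; simp [hc0]
  -- t-derivative of u2 at the slice point
  have hTu2 : pd eT (u2 v) q0
      = -(a (VV v q0) * pd eX (u2 v) q0 + u2 v q0 * (deriv a (VV v q0) * u1 v q0)
          + (u1 v q0 * (deriv a (VV v q0) * u2 v q0
              + u1 v q0 * (deriv (deriv a) (VV v q0) * u1 v q0))
            + deriv a (VV v q0) * u1 v q0 * u2 v q0)) := by
    have h1 : pd eT (u2 v) q0 = pd eX (pd eT (u1 v)) q0 := by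
      rw [show u2 v = pd eX (u1 v) from rfl]
      exact pd_comm (smooth_u1 hv') eT eX q0
    rw [h1, hTu1fun]
    have dP1 : DifferentiableAt ℝ
        (fun p => a (VV v p) * u2 v p + u1 v p * (deriv a (VV v p) * u1 v p)) q0 :=
      ((daV q0).mul (du2 q0)).add ((du1 q0).mul ((dA1V q0).mul (du1 q0)))
    rw [pd_sub dP1.fun_neg (by fun_prop), pd_neg, pd_cube_mul eX rfl (dSSx q0),
      pd_add ((daV q0).fun_mul (du2 q0)) ((du1 q0).fun_mul ((dA1V q0).fun_mul (du1 q0))),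
      pd_mul (daV q0) (du2 q0), pd_mul (du1 q0) ((dA1V q0).fun_mul (du1 q0)),
      pd_mul (dA1V q0) (du1 q0), pd_aV haS hv', pd_A1V haS hv', hc0]
    rw [u1_def, u2_def]
    ring
  -- expand pd eT PP and WW = pd eX PP at q0
  have hTPP := pd_PP haS hbS hv' hrange eT q0
  have hXPP := pd_PP haS hbS hv' hrange eX q0
  rw [hTV, hTu1, hTu2] at hTPP
  rw [u1_def, u2_def] at hXPP
  -- the quotient-rule relation for g = b4 / (6 a')
  have hA1 : deriv a (VV v q0) ≠ 0 := hrange q0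
  have hG1 : deriv (gg a b4) (VV v q0)
      = (deriv b4 (VV v q0) * (6 * deriv a (VV v q0))
          - b4 (VV v q0) * (6 * deriv (deriv a) (VV v q0))) / (6 * deriv a (VV v q0)) ^ 2 := by
    have hd6 : DifferentiableAt ℝ (fun w => 6 * deriv a w) (VV v q0) :=
      (((smooth_da haS).differentiable (by decide)).differentiableAt).const_mul 6
    have := deriv_fun_div (c := b4) (d := fun w => 6 * deriv a w) (x := VV v q0)
      ((hbS.differentiable (by decide)).differentiableAt) hd6 (by simpa using hA1)
    rw [show gg a b4 = fun w => b4 w / (6 * deriv a w) from rfl, this,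
      deriv_const_mul 6 (((smooth_da haS).differentiable (by decide)).differentiableAt)]
  have hG0 : gg a b4 (VV v q0) = b4 (VV v q0) / (6 * deriv a (VV v q0)) := rfl
  -- final algebra
  show pd eT (PP a b4 v) q0 + a (VV v q0) * WW a b4 v q0 - S0 b4 v q0 = 0
  rw [show WW a b4 v = pd eX (PP a b4 v) from rfl, hTPP, hXPP, hG1, hG0]
  show _ + _ - (b4 (VV v q0) * u2 v q0 * u1 v q0
      + 1 / 3 * deriv b4 (VV v q0) * (u1 v q0) ^ 3) = 0
  field_simp
  ring

end Monster
section Final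
open MeasureTheory
variable {a b4 : ℝ → ℝ} {v : ℝ → ℝ → ℝ → ℝ}

theorem B2_vanishes (haS : ContDiff ℝ ∞ a) (hbS : ContDiff ℝ ∞ b4)
    (hv' : ContDiff ℝ ∞ (VV v)) (hrange : ∀ q : P3, deriv a (VV v q) ≠ 0)
    (hE : ∀ q : P3, pd eT (VV v) q = -(a (VV v q) * u1 v q) - q.1 ^ 3 * SS b4 v q)
    (t x : ℝ) : B2 a b4 v (0, t, x) = 0 := by
  set q0 : P3 := (0, t, x) with hq0
  have hc0 : q0.1 ^ 3 = 0 := by norm_num [hq0]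
  have dWW : DifferentiableAt ℝ (WW a b4 v) q0 := diffAt (smooth_WW haS hbS hv' hrange) q0
  have dTPP : DifferentiableAt ℝ (pd eT (PP a b4 v)) q0 :=
    diffAt (pd_smooth (smooth_PP haS hbS hv' hrange) eT) q0
  have daV : DifferentiableAt ℝ (fun p => a (VV v p)) q0 := diffAt (smooth_aV haS hv') q0
  have dS0 : DifferentiableAt ℝ (S0 b4 v) q0 := diffAt (smooth_S0 hbS hv') q0
  -- pd eX JJ at q0 expanded
  have hXJJ : pd eX (JJ a b4 v) q0
      = pd eX (pd eT (PP a b4 v)) q0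
        + (a (VV v q0) * pd eX (WW a b4 v) q0
          + WW a b4 v q0 * (deriv a (VV v q0) * u1 v q0))
        - SS b4 v q0 := by
    have hJe : JJ a b4 v = fun q =>
        (pd eT (PP a b4 v) q + (fun p => a (VV v p) * WW a b4 v p) q) - S0 b4 v q := rfl
    rw [hJe, pd_sub (dTPP.fun_add (daV.fun_mul dWW)) dS0, pd_add dTPP (daV.fun_mul dWW),
      pd_mul daV dWW, pd_aV haS hv', u1_def]
    rfl
  -- Clairaut for W
  have hWt : pd eT (WW a b4 v) q0 = pd eX (pd eT (PP a b4 v)) q0 := by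
    rw [show WW a b4 v = pd eX (PP a b4 v) from rfl]
    exact pd_comm (smooth_PP haS hbS hv' hrange) eT eX q0
  -- pd eX JJ vanishes on the slice
  have hslice : pd eX (JJ a b4 v) q0 = 0 := by
    have h1 : deriv (fun y => JJ a b4 v (0, t, y)) x = pd eX (JJ a b4 v) q0 :=
      deriv_slice_x (diffAt (smooth_JJ haS hbS hv' hrange) q0)
    have h2 : (fun y => JJ a b4 v (0, t, y)) = fun _ => (0:ℝ) := by
      funext y
      exact J_vanishes haS hbS hv' hrange hE t y
    rw [h2] at h1
    simp at h1
    exact h1.symm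
  show -(SS b4 v q0) + pd eT (WW a b4 v) q0 + a (VV v q0) * pd eX (WW a b4 v) q0
      + WW a b4 v q0 * deriv a (VV v q0) * (u1 v q0 + q0.1 ^ 3 * pd eX (WW a b4 v) q0) = 0
  rw [hWt, hc0]
  linear_combination hslice - hXJJ

def VT (a b4 : ℝ → ℝ) (v : ℝ → ℝ → ℝ → ℝ) : P3 → ℝ :=
  fun q => VV v q + q.1 ^ 3 * WW a b4 v q

theorem smooth_VT (haS : ContDiff ℝ ∞ a) (hbS : ContDiff ℝ ∞ b4)
    (hv' : ContDiff ℝ ∞ (VV v)) (hrange : ∀ q : P3, deriv a (VV v q) ≠ 0) :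
    ContDiff ℝ ∞ (VT a b4 v) :=
  hv'.add ((contDiff_fst.pow 3).mul (smooth_WW haS hbS hv' hrange))

theorem cont_R1 (haS : ContDiff ℝ ∞ a) (hbS : ContDiff ℝ ∞ b4)
    (hv' : ContDiff ℝ ∞ (VV v)) (hrange : ∀ q : P3, deriv a (VV v q) ≠ 0) :
    Continuous (R1 a b4 v) := by
  have hc : Continuous (pd eE (B2 a b4 v)) :=
    (pd_smooth (smooth_B2 haS hbS hv' hrange) eE).continuous
  have h2 : Continuous (Function.uncurry
      (fun (q : P3) (s : ℝ) => pd eE (B2 a b4 v) (s * q.1, q.2.1, q.2.2))) := by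
    apply hc.comp
    exact ((continuous_snd.mul (continuous_fst.comp continuous_fst)).prodMk
      (((continuous_fst.comp continuous_snd).comp continuous_fst).prodMk
        ((continuous_snd.comp continuous_snd).comp continuous_fst)))
  exact intervalIntegral.continuous_parametric_intervalIntegral_of_continuous'
    (μ := volume) h2 0 1

theorem cont_Q2 (haS : ContDiff ℝ ∞ a) (hbS : ContDiff ℝ ∞ b4)
    (hv' : ContDiff ℝ ∞ (VV v)) (hrange : ∀ q : P3, deriv a (VV v q) ≠ 0) :
    Continuous (Q2 a b4 v) := by
  have hdda : Continuous (deriv (deriv a)) := (smooth_da (smooth_da haS)).continuous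
  have hVc : Continuous (VV v) := hv'.continuous
  have hWc : Continuous (WW a b4 v) := (smooth_WW haS hbS hv' hrange).continuous
  have h2 : Continuous (Function.uncurry
      (fun (q : P3) (s : ℝ) => (1 - s) * deriv (deriv a)
        (VV v q + s * (q.1 ^ 3 * WW a b4 v q)))) := by
    apply Continuous.mul
    · exact continuous_const.sub continuous_snd
    · apply hdda.comp
      exact (hVc.comp continuous_fst).add (continuous_snd.mul
        ((((continuous_fst.comp continuous_fst)).pow 3).mul (hWc.comp continuous_fst)))
  exact intervalIntegral.continuous_parametric_intervalIntegral_of_continuous'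
    (μ := volume) h2 0 1

end Final

/-- for `u_t + a(u)u_x + ε³∂ₓ(b₄ u_xx u_x + (1/3)b₄' u_x³) = 0` with
`a' ≠ 0`, the order-ε³ terms are eliminated by the canonical transformation
`u ↦ u + ε{u, K}` generated by `K = ∫ ε² (b₄/(6a')) u_x² dx`:
the transformed function solves the transport equation `u_t + a(u)u_x = 0`
modulo `O(ε⁴)`.  Here `{u, K} = ∂ₓ(δK/δu)` and
`δK/δu = ε²(−g'(u)u_x² − 2g(u)u_xx)` with `g = b₄/(6a')`. -/
theorem eliminate_third_order (a b4 : ℝ → ℝ)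
    (ha : ContDiff ℝ (⊤ : ℕ∞) a) (hb4 : ContDiff ℝ (⊤ : ℕ∞) b4)
    (v : ℝ → ℝ → ℝ → ℝ)  -- v ε t x
    (hv : ContDiff ℝ (⊤ : ℕ∞) (fun q : ℝ × ℝ × ℝ => v q.1 q.2.1 q.2.2))
    (ha' : ∀ ε t x, deriv a (v ε t x) ≠ 0)
    -- v solves the full equation containing the ε³ terms:
    (hfull : ∀ ε t x,
      deriv (fun s => v ε s x) t + a (v ε t x) * deriv (v ε t) x
        + ε ^ 3 * deriv (fun y =>
            b4 (v ε t y) * deriv^[2] (v ε t) y * deriv (v ε t) y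
              + (1 / 3) * deriv b4 (v ε t y) * (deriv (v ε t) y) ^ 3) x = 0) :
    -- the canonically transformed function solves the transport equation mod O(ε⁴)
    ∃ R : ℝ → ℝ → ℝ → ℝ,
      Continuous (fun q : ℝ × ℝ × ℝ => R q.1 q.2.1 q.2.2) ∧
      ∀ ε t x,
        (fun (u : ℝ → ℝ → ℝ → ℝ) =>
          deriv (fun s => u ε s x) t + a (u ε t x) * deriv (u ε t) x)
          (fun ε t x => v ε t x + ε * deriv (fun y =>
            ε ^ 2 * (-(deriv (fun w => b4 w / (6 * deriv a w)) (v ε t y))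
                  * (deriv (v ε t) y) ^ 2
                - 2 * (b4 (v ε t y) / (6 * deriv a (v ε t y)))
                  * deriv^[2] (v ε t) y)) x)
        = ε ^ 4 * R ε t x := by
  have haS : ContDiff ℝ ∞ a := ha.of_le (by simp)
  have hbS : ContDiff ℝ ∞ b4 := hb4.of_le (by simp)
  have hv' : ContDiff ℝ ∞ (VV v) := hv.of_le (by simp)
  have hrange : ∀ q : P3, deriv a (VV v q) ≠ 0 := fun q => ha' q.1 q.2.1 q.2.2
  have hu1x : ∀ ε t x, deriv (v ε t) x = u1 v (ε, t, x) := fun ε t x =>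
    deriv_slice_x (f := VV v) (diffAt hv' _)
  have hu1fun : ∀ ε t, deriv (v ε t) = fun y => u1 v (ε, t, y) := fun ε t =>
    funext (fun y => hu1x ε t y)
  have hu2x : ∀ ε t x, deriv^[2] (v ε t) x = u2 v (ε, t, x) := by
    intro ε t x
    show deriv (deriv (v ε t)) x = u2 v (ε, t, x)
    rw [hu1fun ε t]
    exact deriv_slice_x (f := u1 v) (diffAt (smooth_u1 hv') _)
  have hE : ∀ q : P3, pd eT (VV v) q = -(a (VV v q) * u1 v q) - q.1 ^ 3 * SS b4 v q := by
    rintro ⟨ε, t, x⟩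
    have h := hfull ε t x
    have h1 : deriv (fun s => v ε s x) t = pd eT (VV v) (ε, t, x) :=
      deriv_slice_t (f := VV v) (diffAt hv' _)
    have h2 : deriv (fun y =>
        b4 (v ε t y) * deriv^[2] (v ε t) y * deriv (v ε t) y
          + (1 / 3) * deriv b4 (v ε t y) * (deriv (v ε t) y) ^ 3) x
        = SS b4 v (ε, t, x) := by
      have hfe : (fun y => b4 (v ε t y) * deriv^[2] (v ε t) y * deriv (v ε t) y
          + (1 / 3) * deriv b4 (v ε t y) * (deriv (v ε t) y) ^ 3)
          = fun y => S0 b4 v (ε, t, y) := by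
        funext y
        rw [hu1x ε t y, hu2x ε t y]
        rfl
      rw [hfe]
      exact deriv_slice_x (f := S0 b4 v) (diffAt (smooth_S0 hbS hv') _)
    rw [h1, h2, hu1x ε t x] at h
    show pd eT (VV v) (ε, t, x)
        = -(a (VV v (ε, t, x)) * u1 v (ε, t, x)) - ε ^ 3 * SS b4 v (ε, t, x)
    have ha0 : a (v ε t x) = a (VV v (ε, t, x)) := rfl
    rw [ha0] at h
    linarith [h]
  have hB20 := B2_vanishes haS hbS hv' hrange hE
  have hB2S := smooth_B2 haS hbS hv' hrange
  have hWS := smooth_WW haS hbS hv' hrange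
  have hVTS := smooth_VT haS hbS hv' hrange
  refine ⟨fun ε t x => R1 a b4 v (ε, t, x)
      + ε ^ 2 * (WW a b4 v (ε, t, x)) ^ 2 * Q2 a b4 v (ε, t, x)
        * (u1 v (ε, t, x) + ε ^ 3 * pd eX (WW a b4 v) (ε, t, x)), ?_, ?_⟩
  · exact (cont_R1 haS hbS hv' hrange).add
      ((((continuous_fst.pow 2).mul (hWS.continuous.pow 2)).mul
        (cont_Q2 haS hbS hv' hrange)).mul
        ((smooth_u1 hv').continuous.add
          ((continuous_fst.pow 3).mul (pd_smooth hWS eX).continuous)))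
  · intro ε t x
    have hWx' : ∀ ε t x : ℝ, deriv (fun y =>
        ε ^ 2 * (-(deriv (fun w => b4 w / (6 * deriv a w)) (v ε t y))
              * (deriv (v ε t) y) ^ 2
            - 2 * (b4 (v ε t y) / (6 * deriv a (v ε t y)))
              * deriv^[2] (v ε t) y)) x = ε ^ 2 * WW a b4 v (ε, t, x) := by
      intro ε t x
      have hfe : (fun y => ε ^ 2 * (-(deriv (fun w => b4 w / (6 * deriv a w)) (v ε t y))
              * (deriv (v ε t) y) ^ 2
            - 2 * (b4 (v ε t y) / (6 * deriv a (v ε t y)))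
              * deriv^[2] (v ε t) y))
          = fun y => ε ^ 2 * PP a b4 v (ε, t, y) := by
        funext y
        rw [hu1x ε t y, hu2x ε t y]
        rfl
      have hdPP : DifferentiableAt ℝ (fun y => PP a b4 v (ε, t, y)) x :=
        by have := (diffAt (smooth_PP haS hbS hv' hrange) ((ε, t, x) : P3)).comp x
            (by fun_prop : DifferentiableAt ℝ (fun y : ℝ => ((ε, t, y) : P3)) x); exact this
      rw [hfe, deriv_const_mul _ hdPP]
      congr 1
      exact deriv_slice_x (f := PP a b4 v) (diffAt (smooth_PP haS hbS hv' hrange) _)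
    have hufunpt : ∀ ε t x : ℝ, v ε t x + ε * deriv (fun y =>
            ε ^ 2 * (-(deriv (fun w => b4 w / (6 * deriv a w)) (v ε t y))
                  * (deriv (v ε t) y) ^ 2
                - 2 * (b4 (v ε t y) / (6 * deriv a (v ε t y)))
                  * deriv^[2] (v ε t) y)) x = VT a b4 v (ε, t, x) := by
      intro ε t x
      rw [hWx' ε t x]
      show v ε t x + ε * (ε ^ 2 * WW a b4 v (ε, t, x))
          = v ε t x + ε ^ 3 * WW a b4 v (ε, t, x)
      ring
    beta_reduce
    rw [show (fun s => v ε s x + ε * deriv (fun y =>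
            ε ^ 2 * (-(deriv (fun w => b4 w / (6 * deriv a w)) (v ε s y))
                  * (deriv (v ε s) y) ^ 2
                - 2 * (b4 (v ε s y) / (6 * deriv a (v ε s y)))
                  * deriv^[2] (v ε s) y)) x)
        = fun s => VT a b4 v (ε, s, x) from funext fun s => hufunpt ε s x]
    rw [show (fun x => v ε t x + ε * deriv (fun y =>
            ε ^ 2 * (-(deriv (fun w => b4 w / (6 * deriv a w)) (v ε t y))
                  * (deriv (v ε t) y) ^ 2
                - 2 * (b4 (v ε t y) / (6 * deriv a (v ε t y)))
                  * deriv^[2] (v ε t) y)) x)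
        = fun x => VT a b4 v (ε, t, x) from funext fun x => hufunpt ε t x]
    rw [hufunpt ε t x]
    have hT : deriv (fun s => VT a b4 v (ε, s, x)) t = pd eT (VT a b4 v) (ε, t, x) :=
      deriv_slice_t (diffAt hVTS _)
    have hX : deriv (fun y => VT a b4 v (ε, t, y)) x = pd eX (VT a b4 v) (ε, t, x) :=
      deriv_slice_x (diffAt hVTS _)
    rw [hT, hX]
    have dcW : ∀ e : P3, DifferentiableAt ℝ (fun q : P3 => q.1 ^ 3 * WW a b4 v q)
        ((ε, t, x) : P3) :=
      fun _ => ((differentiable_fst.pow 3).differentiableAt).mul (diffAt hWS _)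
    have hTVT : pd eT (VT a b4 v) (ε, t, x)
        = pd eT (VV v) (ε, t, x) + ε ^ 3 * pd eT (WW a b4 v) (ε, t, x) := by
      have hVTe : VT a b4 v = fun q => VV v q + q.1 ^ 3 * WW a b4 v q := rfl
      rw [hVTe, pd_add (diffAt hv' _) (dcW eT), pd_cube_mul eT rfl (diffAt hWS _)]
    have hXVT : pd eX (VT a b4 v) (ε, t, x)
        = u1 v (ε, t, x) + ε ^ 3 * pd eX (WW a b4 v) (ε, t, x) := by
      have hVTe : VT a b4 v = fun q => VV v q + q.1 ^ 3 * WW a b4 v q := rfl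
      rw [hVTe, pd_add (diffAt hv' _) (dcW eX), pd_cube_mul eX rfl (diffAt hWS _), u1_def]
    have htay : a (VT a b4 v (ε, t, x))
        = a (VV v (ε, t, x))
          + ε ^ 3 * WW a b4 v (ε, t, x) * deriv a (VV v (ε, t, x))
          + (ε ^ 3 * WW a b4 v (ε, t, x)) ^ 2 * Q2 a b4 v (ε, t, x) :=
      taylor2 haS (VV v (ε, t, x)) (ε ^ 3 * WW a b4 v (ε, t, x))
    have hfact : B2 a b4 v (ε, t, x) = ε * R1 a b4 v (ε, t, x) :=
      factor_eps hB2S hB20 ε t x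
    have hB2def : B2 a b4 v (ε, t, x)
        = -(SS b4 v (ε, t, x)) + pd eT (WW a b4 v) (ε, t, x)
          + a (VV v (ε, t, x)) * pd eX (WW a b4 v) (ε, t, x)
          + WW a b4 v (ε, t, x) * deriv a (VV v (ε, t, x))
            * (u1 v (ε, t, x) + ε ^ 3 * pd eX (WW a b4 v) (ε, t, x)) := rfl
    have hE' : pd eT (VV v) (ε, t, x)
        = -(a (VV v (ε, t, x)) * u1 v (ε, t, x)) - ε ^ 3 * SS b4 v (ε, t, x) :=
      hE (ε, t, x)
    rw [hTVT, hXVT, htay, hE']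
    linear_combination ε ^ 3 * hfact - ε ^ 3 * hB2def
end
end

section
/- Let φ(x) = sech²(x) and let Φ denote a branch of its inverse. For the transport equation u_t + 6uⁿ u_x = 0 (n a positive integer) with initial data φ, the generic critical point determined by the system a(u_c)t_c + Φ(u_c) = x_c, a'(u_c)t_c + Φ'(u_c) = 0, a''(u_c)t_c + Φ''(u_c) = 0 with a(u) = 6uⁿ has u_c = 2n/(2n+1), t_c = (1+2n)^{n+1/2}/(6(2n)^{n+1}), x_c = √(2n+1)/(2n) + ln((√(2n+1)+1)/√(2n)), and k = −(1/6)(a'''(u_c)t_c + Φ'''(u_c)) = (2n+1)^{9/2}/(96 n²). -/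
/-!
Write everything in terms of `S = √(2n+1)`. Then `u_c = 1 - S⁻²`, `√(1 - u_c) = S⁻¹` and
`6 u_cⁿ t_c = S / (S² - 1)`, so `a⁽ʲ⁾(u_c) t_c = n(n-1)⋯(n-j+1) u_c⁻ʲ · S / (S² - 1)`.
Since `Φ(u) = log (1 + √(1 - u)) - ½ log u` on `(0, 1)`, its first three derivatives are
explicit algebraic functions of `u` and `√(1 - u)`, and each of the four claimed identities
becomes a rational identity in `S`.
-/

open Real

/-- The (decreasing) branch of the inverse of `φ(x) = sech²x`:
`Φ(u) = log((1 + √(1−u))/√u)`. -/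
noncomputable def Phi : ℝ → ℝ := fun u =>
  Real.log ((1 + Real.sqrt (1 - u)) / Real.sqrt u)

open Set

theorem hasDerivAt_sqrt_one_sub {x : ℝ} (hx : x < 1) :
    HasDerivAt (fun y => √(1 - y)) (-1 / (2 * √(1 - x))) x :=
  ((hasDerivAt_id x).const_sub 1).sqrt (by simp; linarith)

theorem hasDerivAt_Phi {u : ℝ} (hu : u ∈ Ioo (0 : ℝ) 1) :
    HasDerivAt Phi (-1 / (2 * u * √(1 - u))) u := by
  obtain ⟨hu0, hu1⟩ := hu
  have hs : 0 < √(1 - u) := sqrt_pos.2 (by linarith)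
  have hPhi : (fun x => log (1 + √(1 - x)) - log x / 2) =ᶠ[nhds u] Phi := by
    filter_upwards [Ioo_mem_nhds hu0 hu1] with x hx
    rw [Phi, log_div (by positivity) (sqrt_pos.2 hx.1).ne', log_sqrt hx.1.le]
  refine (((hasDerivAt_sqrt_one_sub hu1).const_add 1).log (by positivity) |>.sub
    ((hasDerivAt_log hu0.ne').div_const 2)).congr_of_eventuallyEq hPhi.symm |>.congr_deriv ?_
  field_simp
  linear_combination -sq_sqrt (by linarith : (0 : ℝ) ≤ 1 - u)

theorem hasDerivAt_Phi_deriv {u : ℝ} (hu : u ∈ Ioo (0 : ℝ) 1) :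
    HasDerivAt (fun u => -1 / (2 * u * √(1 - u)))
      ((2 - 3 * u) / (4 * u ^ 2 * √(1 - u) ^ 3)) u := by
  obtain ⟨hu0, hu1⟩ := hu
  have hs : 0 < √(1 - u) := sqrt_pos.2 (by linarith)
  refine ((hasDerivAt_const u (-1 : ℝ)).div (((hasDerivAt_id' u).const_mul 2).fun_mul
    (hasDerivAt_sqrt_one_sub hu1)) (by positivity : 2 * u * √(1 - u) ≠ 0)).congr_deriv ?_
  field_simp
  linear_combination 8 * sq_sqrt (by linarith : (0 : ℝ) ≤ 1 - u)

theorem hasDerivAt_Phi_deriv2 {u : ℝ} (hu : u ∈ Ioo (0 : ℝ) 1) :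
    HasDerivAt (fun u => (2 - 3 * u) / (4 * u ^ 2 * √(1 - u) ^ 3))
      (-(15 * u ^ 2 - 20 * u + 8) / (8 * u ^ 3 * √(1 - u) ^ 5)) u := by
  obtain ⟨hu0, hu1⟩ := hu
  have hs : 0 < √(1 - u) := sqrt_pos.2 (by linarith)
  refine ((((hasDerivAt_id' u).const_mul 3).const_sub 2).div
    (((hasDerivAt_pow 2 u).const_mul 4).fun_mul ((hasDerivAt_sqrt_one_sub hu1).fun_pow 3))
    (by positivity : 4 * u ^ 2 * √(1 - u) ^ 3 ≠ 0)).congr_deriv ?_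
  field_simp
  linear_combination
    (48 * u ^ 2 - 64 * u) * √(1 - u) ^ 2 * sq_sqrt (by linarith : (0 : ℝ) ≤ 1 - u)

theorem iterate_deriv_eqOn_succ {f g g' : ℝ → ℝ} {U : Set ℝ} {k : ℕ} (hU : IsOpen U)
    (hf : EqOn (deriv^[k] f) g U) (hg : ∀ x ∈ U, HasDerivAt g (g' x) x) :
    EqOn (deriv^[k + 1] f) g' U := fun x hx => by
  rw [Function.iterate_succ_apply', (hf.eventuallyEq_of_mem (hU.mem_nhds hx)).deriv_eq,
    (hg x hx).deriv]

theorem deriv_Phi_eqOn : EqOn (deriv Phi) (fun u => -1 / (2 * u * √(1 - u))) (Ioo 0 1) :=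
  iterate_deriv_eqOn_succ (k := 0) isOpen_Ioo (fun _ _ => rfl) fun _ => hasDerivAt_Phi

theorem iterate_deriv_two_Phi_eqOn :
    EqOn (deriv^[2] Phi) (fun u => (2 - 3 * u) / (4 * u ^ 2 * √(1 - u) ^ 3)) (Ioo 0 1) :=
  iterate_deriv_eqOn_succ isOpen_Ioo deriv_Phi_eqOn fun _ => hasDerivAt_Phi_deriv

theorem iterate_deriv_three_Phi_eqOn :
    EqOn (deriv^[3] Phi)
      (fun u => -(15 * u ^ 2 - 20 * u + 8) / (8 * u ^ 3 * √(1 - u) ^ 5)) (Ioo 0 1) :=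
  iterate_deriv_eqOn_succ isOpen_Ioo iterate_deriv_two_Phi_eqOn fun _ => hasDerivAt_Phi_deriv2

theorem iterate_deriv_const_mul_pow_mul_pow (c u : ℝ) (n j : ℕ) :
    deriv^[j] (fun w => c * w ^ n) u * u ^ j =
      c * (∏ i ∈ Finset.range j, ((n : ℝ) - i)) * u ^ n := by
  rw [← iteratedDeriv_eq_iterate, iteratedDeriv_const_mul_field, iteratedDeriv_eq_iterate,
    iter_deriv_pow, mul_assoc, mul_assoc, mul_assoc]
  rcases le_or_gt j n with hjn | hnj
  · rw [pow_sub_mul_pow _ hjn]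
  · rw [Finset.prod_eq_zero (Finset.mem_range.2 hnj) (sub_self _)]
    simp

theorem rpow_natCast_add_half {x : ℝ} (hx : 0 < x) (m : ℕ) :
    x ^ ((m : ℝ) + 1 / 2) = x ^ m * √x := by
  rw [rpow_add hx, rpow_natCast, sqrt_eq_rpow]

namespace CriticalPoint

variable {n : ℕ} {S uc tc : ℝ}

theorem uc_mem_Ioo (hS : 1 < S) (huc : uc = (S ^ 2 - 1) / S ^ 2) : uc ∈ Ioo (0 : ℝ) 1 := by
  have hS2 : 0 < S ^ 2 - 1 := by nlinarith
  subst huc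
  exact ⟨by positivity, (div_lt_one (by positivity)).2 (by linarith)⟩

theorem sqrt_one_sub_uc (hS : 1 < S) (huc : uc = (S ^ 2 - 1) / S ^ 2) : √(1 - uc) = S⁻¹ := by
  rw [huc, one_sub_div (by positivity), sub_sub_cancel, ← one_div, sqrt_div' _ (sq_nonneg S),
    sqrt_one, sqrt_sq (by linarith), one_div]

theorem Phi_uc (hS : 1 < S) (huc : uc = (S ^ 2 - 1) / S ^ 2) :
    Phi uc = log ((S + 1) / √(S ^ 2 - 1)) := by
  have hsqrt_uc : √uc = √(S ^ 2 - 1) / S := by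
    rw [huc, sqrt_div' _ (sq_nonneg S), sqrt_sq (by linarith)]
  have hsqrt_pos : 0 < √(S ^ 2 - 1) := sqrt_pos.2 (by nlinarith)
  rw [Phi, sqrt_one_sub_uc hS huc, hsqrt_uc]
  congr 1
  field_simp

theorem iterate_deriv_mul_tc (hS : 1 < S) (huc : uc = (S ^ 2 - 1) / S ^ 2)
    (htc : 6 * uc ^ n * tc = S / (S ^ 2 - 1)) (j : ℕ) :
    deriv^[j] (fun w => 6 * w ^ n) uc * tc =
      (∏ i ∈ Finset.range j, ((n : ℝ) - i)) * (S / (S ^ 2 - 1)) / uc ^ j := by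
  rw [eq_div_iff (pow_ne_zero _ (uc_mem_Ioo hS huc).1.ne'), mul_right_comm,
    iterate_deriv_const_mul_pow_mul_pow, ← htc]
  ring

theorem deriv_eq_zero (hS : 1 < S) (hn : (n : ℝ) = (S ^ 2 - 1) / 2)
    (huc : uc = (S ^ 2 - 1) / S ^ 2) (htc : 6 * uc ^ n * tc = S / (S ^ 2 - 1)) :
    deriv (fun w => 6 * w ^ n) uc * tc + deriv Phi uc = 0 := by
  have hS2 : S ^ 2 - 1 ≠ 0 := by nlinarith
  rw [← Function.iterate_one deriv, iterate_deriv_mul_tc hS huc htc,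
    Function.iterate_one, deriv_Phi_eqOn (uc_mem_Ioo hS huc)]
  beta_reduce
  rw [sqrt_one_sub_uc hS huc, huc, hn]
  simp only [Finset.prod_range_one, Nat.cast_zero, sub_zero]
  field_simp
  ring

theorem iterate_deriv_two_eq_zero (hS : 1 < S) (hn : (n : ℝ) = (S ^ 2 - 1) / 2)
    (huc : uc = (S ^ 2 - 1) / S ^ 2) (htc : 6 * uc ^ n * tc = S / (S ^ 2 - 1)) :
    deriv^[2] (fun w => 6 * w ^ n) uc * tc + deriv^[2] Phi uc = 0 := by
  have hS2 : S ^ 2 - 1 ≠ 0 := by nlinarith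
  rw [iterate_deriv_mul_tc hS huc htc, iterate_deriv_two_Phi_eqOn (uc_mem_Ioo hS huc)]
  beta_reduce
  rw [sqrt_one_sub_uc hS huc, huc, hn]
  simp only [Finset.prod_range_succ, Finset.prod_range_zero, Nat.cast_zero, Nat.cast_one,
    one_mul, sub_zero]
  field_simp
  ring

theorem breakup_constant_eq (hS : 1 < S) (hn : (n : ℝ) = (S ^ 2 - 1) / 2)
    (huc : uc = (S ^ 2 - 1) / S ^ 2) (htc : 6 * uc ^ n * tc = S / (S ^ 2 - 1)) :
    -(1 / 6) * (deriv^[3] (fun w => 6 * w ^ n) uc * tc + deriv^[3] Phi uc) =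
      S ^ 9 / (24 * (S ^ 2 - 1) ^ 2) := by
  have hS2 : S ^ 2 - 1 ≠ 0 := by nlinarith
  rw [iterate_deriv_mul_tc hS huc htc, iterate_deriv_three_Phi_eqOn (uc_mem_Ioo hS huc)]
  beta_reduce
  rw [sqrt_one_sub_uc hS huc, huc, hn]
  simp only [Finset.prod_range_succ, Finset.prod_range_zero, Nat.cast_zero, Nat.cast_one,
    Nat.cast_ofNat, one_mul, sub_zero]
  field_simp
  ring

end CriticalPoint

/-- for the transport equation `u_t + 6uⁿu_x = 0` with initial
data `φ(x) = sech²x`, the critical point determined by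
`a(u_c)t_c + Φ(u_c) = x_c`, `a'(u_c)t_c + Φ'(u_c) = 0`, `a''(u_c)t_c + Φ''(u_c) = 0`
is `u_c = 2n/(2n+1)`, `t_c = (1+2n)^{n+1/2}/(6(2n)^{n+1})`,
`x_c = √(2n+1)/(2n) + log((√(2n+1)+1)/√(2n))`, with breakup constant
`k = −(1/6)(a'''(u_c)t_c + Φ'''(u_c)) = (2n+1)^{9/2}/(96n²)`. -/
theorem genKdV_critical_point (n : ℕ) (hn : 1 ≤ n)
    (a : ℝ → ℝ) (hadef : a = fun w => 6 * w ^ n)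
    (uc tc xc k : ℝ)
    (huc : uc = 2 * n / (2 * n + 1))
    (htc : tc = (1 + 2 * (n : ℝ)) ^ ((n : ℝ) + 1 / 2) / (6 * (2 * (n : ℝ)) ^ (n + 1)))
    (hxc : xc = Real.sqrt (2 * n + 1) / (2 * n)
        + Real.log ((Real.sqrt (2 * n + 1) + 1) / Real.sqrt (2 * n)))
    (hk : k = (2 * (n : ℝ) + 1) ^ ((9 : ℝ) / 2) / (96 * (n : ℝ) ^ 2)) :
    a uc * tc + Phi uc = xc ∧
    deriv a uc * tc + deriv Phi uc = 0 ∧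
    deriv^[2] a uc * tc + deriv^[2] Phi uc = 0 ∧
    -(1 / 6) * (deriv^[3] a uc * tc + deriv^[3] Phi uc) = k := by
  subst hadef
  set S := √(2 * n + 1) with hS_def
  have hSsq : S ^ 2 = 2 * n + 1 := sq_sqrt (by positivity)
  have hS : 1 < S := by
    nlinarith [sqrt_nonneg (2 * (n : ℝ) + 1), (Nat.one_le_cast.2 hn : (1 : ℝ) ≤ n)]
  have hnS : (n : ℝ) = (S ^ 2 - 1) / 2 := by linarith
  have hucS : uc = (S ^ 2 - 1) / S ^ 2 := by rw [huc, hSsq]; ring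
  have htcS : 6 * uc ^ n * tc = S / (S ^ 2 - 1) := by
    have hS2 : S ^ 2 - 1 ≠ 0 := by nlinarith
    rw [htc, hucS, add_comm 1, rpow_natCast_add_half (by positivity), ← hS_def, ← hSsq, hnS,
      div_pow]
    field_simp
    ring
  have hxcS : xc = S / (S ^ 2 - 1) + log ((S + 1) / √(S ^ 2 - 1)) := by
    rw [hxc, show 2 * (n : ℝ) = S ^ 2 - 1 by linarith]
  have hkS : k = S ^ 9 / (24 * (S ^ 2 - 1) ^ 2) := by
    rw [hk, show (9 : ℝ) / 2 = (4 : ℕ) + 1 / 2 by norm_num,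
      rpow_natCast_add_half (by positivity), ← hS_def, ← hSsq, hnS]
    ring
  refine ⟨?_, CriticalPoint.deriv_eq_zero hS hnS hucS htcS,
    CriticalPoint.iterate_deriv_two_eq_zero hS hnS hucS htcS,
    hkS ▸ CriticalPoint.breakup_constant_eq hS hnS hucS htcS⟩
  beta_reduce
  rw [htcS, CriticalPoint.Phi_uc hS hucS, hxcS]
end
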